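/- Let f : [0,1) → ℝ be a bi-Lipschitz map with constant C (i.e., C⁻¹|x−y| ≤ |f(x)−f(y)| ≤ C|x−y|). Then for every probability measure μ on [0,1) and every n, |H(f#μ, D_n) − H(μ, D_n)| = O(log C), where D_n is the level-n dyadic partition. -/

import Mathlib

open MeasureTheory

/-- `ent p = -p log₂ p`, the entropy summand (base-2 logarithm). -/
noncomputable def ent (p : ℝ) : ℝ := -(p * Real.logb 2 p)

/-- Shannon entropy of `μ` with respect to the level-`n` dyadic partition of `ℝ`. -/
noncomputable def HdyZ (μ : Measure ℝ) (n : ℕ) : ℝ :=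
  ∑' k : ℤ, ent ((μ (Set.Ico ((k : ℝ) / 2 ^ n) (((k : ℝ) + 1) / 2 ^ n))).toReal)

/-! Couple the two partitions through the joint law of the cell indices `⌊x 2ⁿ⌋` and
`⌊f x 2ⁿ⌋` under `μ`. For index maps `X, Y` one has
`H(Y) ≤ H(X, Y) = H(X) + H(Y | X) ≤ H(X) + log₂ m` as soon as every fiber of `X` meets at most `m` values of `Y`. Since `f` is bi-Lipschitz on
`[0, 1)`, points of one dyadic cell land in cells of the other partition whose indices differ by
at most `⌈C⌉`, so `m = 2⌈C⌉ + 1` works in both directions, and `log₂ m ≤ 3 + log₂ C`. -/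

open Finset Real

section Ent

variable {ι κ : Type*}

@[simp]
lemma ent_zero : ent 0 = 0 := by simp [ent]

lemma logb_two_natCast_nonneg (m : ℕ) : 0 ≤ logb 2 m :=
  div_nonneg (log_natCast_nonneg m) (log_nonneg one_le_two)

lemma ent_sum_le_sum_ent {T : Finset ι} {p : ι → ℝ} (hp : ∀ i ∈ T, 0 ≤ p i) :
    ent (∑ i ∈ T, p i) ≤ ∑ i ∈ T, ent (p i) := by
  rw [ent, sum_mul, ← sum_neg_distrib]
  refine sum_le_sum fun i hi => neg_le_neg ?_
  rcases (hp i hi).eq_or_lt with h0 | h0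
  · simp [← h0]
  · exact mul_le_mul_of_nonneg_left
      (logb_le_logb_of_le one_lt_two h0 (single_le_sum hp hi)) (hp i hi)

lemma concaveOn_logb_two : ConcaveOn ℝ (Set.Ioi 0) (logb 2) := by
  have h := strictConcaveOn_log_Ioi.concaveOn.smul (inv_nonneg.2 (log_nonneg one_le_two))
  have hlogb : (fun x => (log 2)⁻¹ • log x) = logb 2 := by
    ext x
    rw [smul_eq_mul, inv_mul_eq_div, logb]
  rwa [hlogb] at h

lemma sum_ent_le_ent_sum_add_mul_logb_card {T : Finset ι} {p : ι → ℝ}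
    (hp : ∀ i ∈ T, 0 < p i) :
    ∑ i ∈ T, ent (p i) ≤ ent (∑ i ∈ T, p i) + (∑ i ∈ T, p i) * logb 2 #T := by
  rcases T.eq_empty_or_nonempty with rfl | hT
  · simp
  set s := ∑ i ∈ T, p i
  have hs : 0 < s := sum_pos hp hT
  have jensen : ∑ i ∈ T, (p i / s) • logb 2 (s / p i) ≤
      logb 2 (∑ i ∈ T, (p i / s) • (s / p i)) :=
    concaveOn_logb_two.le_map_sum (fun i hi => div_nonneg (hp i hi).le hs.le)
      (by rw [← sum_div, div_self hs.ne']) (fun i hi => div_pos hs (hp i hi))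
  have hcancel : ∀ i ∈ T, (p i / s) • (s / p i) = 1 := fun i hi => by
    have := (hp i hi).ne'
    rw [smul_eq_mul]
    field_simp
  rw [sum_congr rfl hcancel, sum_const, nsmul_one] at jensen
  have hexpand : ∀ i ∈ T, (p i / s) • logb 2 (s / p i) = (p i * logb 2 s + ent (p i)) / s :=
    fun i hi => by
      rw [logb_div hs.ne' (hp i hi).ne', ent, smul_eq_mul]
      ring
  rw [sum_congr rfl hexpand, ← sum_div, div_le_iff₀ hs, sum_add_distrib, ← sum_mul] at jensen
  rw [ent]
  linarith

lemma sum_ent_le_of_card_support_le {T : Finset ι} {p : ι → ℝ} (hp : ∀ i ∈ T, 0 ≤ p i)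
    {m : ℕ} (hm : #{i ∈ T | p i ≠ 0} ≤ m) :
    ∑ i ∈ T, ent (p i) ≤ ent (∑ i ∈ T, p i) + (∑ i ∈ T, p i) * logb 2 m := by
  classical
  have hent : ∀ i ∈ T, ent (p i) ≠ 0 → p i ≠ 0 := fun i _ h h0 => h (by simp [h0])
  rw [← sum_filter_of_ne hent, ← sum_filter_ne_zero (f := p) T]
  have hpos : ∀ i ∈ T.filter (p · ≠ 0), 0 < p i := fun i hi =>
    (hp i (mem_filter.1 hi).1).lt_of_ne' (mem_filter.1 hi).2
  refine (sum_ent_le_ent_sum_add_mul_logb_card hpos).trans (add_le_add le_rfl ?_)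
  refine mul_le_mul_of_nonneg_left ?_ (sum_nonneg fun i hi => (hpos i hi).le)
  rcases Nat.eq_zero_or_pos #{i ∈ T | p i ≠ 0} with h0 | h0
  · rw [h0, Nat.cast_zero, logb_zero]
    exact logb_two_natCast_nonneg m
  · exact logb_le_logb_of_le one_lt_two (by exact_mod_cast h0) (by exact_mod_cast hm)

lemma sum_ent_sum_le_sum_ent_sum_add_logb {K : Finset κ} {L : Finset ι} {q : κ → ι → ℝ}
    (hq : ∀ k l, 0 ≤ q k l) {m : ℕ} (hm : ∀ l ∈ L, #{k ∈ K | q k l ≠ 0} ≤ m)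
    (htot : ∑ l ∈ L, ∑ k ∈ K, q k l ≤ 1) :
    ∑ k ∈ K, ent (∑ l ∈ L, q k l) ≤ ∑ l ∈ L, ent (∑ k ∈ K, q k l) + logb 2 m := by
  calc ∑ k ∈ K, ent (∑ l ∈ L, q k l)
      ≤ ∑ k ∈ K, ∑ l ∈ L, ent (q k l) :=
        sum_le_sum fun k _ => ent_sum_le_sum_ent fun l _ => hq k l
    _ = ∑ l ∈ L, ∑ k ∈ K, ent (q k l) := sum_comm
    _ ≤ ∑ l ∈ L, (ent (∑ k ∈ K, q k l) + (∑ k ∈ K, q k l) * logb 2 m) :=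
        sum_le_sum fun l hl => sum_ent_le_of_card_support_le (fun k _ => hq k l) (hm l hl)
    _ = ∑ l ∈ L, ent (∑ k ∈ K, q k l) + (∑ l ∈ L, ∑ k ∈ K, q k l) * logb 2 m := by
        rw [sum_add_distrib, sum_mul]
    _ ≤ ∑ l ∈ L, ent (∑ k ∈ K, q k l) + logb 2 m := by
        gcongr
        exact mul_le_of_le_one_left (logb_two_natCast_nonneg m) htot

end Ent

section Partition

variable {α ι κ : Type*} [MeasurableSpace α]

noncomputable def partitionEntropy (μ : Measure α) (a : α → ι) : ℝ :=
  ∑' i, ent (μ.real (a ⁻¹' {i}))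

lemma partitionEntropy_eq_sum {μ : Measure α} {s : Set α} (hs : μ sᶜ = 0) {a : α → ι}
    {L : Finset ι} (haL : ∀ x ∈ s, a x ∈ L) :
    partitionEntropy μ a = ∑ l ∈ L, ent (μ.real (a ⁻¹' {l})) := by
  refine tsum_eq_sum fun l hl => ?_
  have hnull : μ (a ⁻¹' {l}) = 0 :=
    measure_mono_null (fun x (hx : a x = l) hxs => hl (hx ▸ haL x hxs)) hs
  simp [measureReal_def, hnull]

lemma measureReal_eq_sum_inter_preimage [MeasurableSpace κ] [MeasurableSingletonClass κ]
    {μ : Measure α} [IsFiniteMeasure μ] {s : Set α} (hs : μ sᶜ = 0) {b : α → κ}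
    (hb : Measurable b) {K : Finset κ} (hbK : ∀ x ∈ s, b x ∈ K) (A : Set α) :
    μ.real A = ∑ k ∈ K, μ.real (b ⁻¹' {k} ∩ A) := by
  have hconull : μ (b ⁻¹' K)ᶜ = 0 :=
    measure_mono_null (fun x hx hxs => hx (hbK x hxs)) hs
  simp_rw [← measureReal_restrict_apply (hb (measurableSet_singleton _))]
  rw [sum_measureReal_preimage_singleton K fun k _ => hb (measurableSet_singleton k),
    measureReal_restrict_apply (hb K.measurableSet), Set.inter_comm, measureReal_def,
    measureReal_def, measure_inter_conull hconull]

theorem partitionEntropy_le_add_logb [MeasurableSpace ι] [MeasurableSingletonClass ι]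
    [MeasurableSpace κ] [MeasurableSingletonClass κ] {μ : Measure α} [IsProbabilityMeasure μ]
    {s : Set α} (hs : μ sᶜ = 0) {a : α → ι} {b : α → κ} (ha : Measurable a) (hb : Measurable b)
    {L : Finset ι} {K : Finset κ} (haL : ∀ x ∈ s, a x ∈ L) (hbK : ∀ x ∈ s, b x ∈ K) {m : ℕ}
    (hm : ∀ l, (b '' (s ∩ a ⁻¹' {l})).ncard ≤ m) :
    partitionEntropy μ b ≤ partitionEntropy μ a + logb 2 m := by
  set joint : κ → ι → ℝ := fun k l => μ.real (b ⁻¹' {k} ∩ a ⁻¹' {l})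
  have hmargL (l : ι) : μ.real (a ⁻¹' {l}) = ∑ k ∈ K, joint k l :=
    measureReal_eq_sum_inter_preimage hs hb hbK _
  have hmargK (k : κ) : μ.real (b ⁻¹' {k}) = ∑ l ∈ L, joint k l := by
    simp only [joint, Set.inter_comm (b ⁻¹' {k})]
    exact measureReal_eq_sum_inter_preimage hs ha haL _
  have hsupp (l : ι) : #{k ∈ K | joint k l ≠ 0} ≤ m := by
    refine le_trans ?_ (hm l)
    rw [← Set.ncard_coe_finset]
    refine Set.ncard_le_ncard ?_ (K.finite_toSet.subset ?_)
    · intro k hk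
      have hq : μ (b ⁻¹' {k} ∩ a ⁻¹' {l} ∩ s) ≠ 0 := by
        rw [measure_inter_conull hs]
        exact fun h => (mem_filter.1 hk).2 (by simp [joint, measureReal_def, h])
      obtain ⟨x, ⟨hxk, hxl⟩, hxs⟩ := nonempty_of_measure_ne_zero hq
      exact ⟨x, ⟨hxs, hxl⟩, hxk⟩
    · rintro _ ⟨x, ⟨hxs, -⟩, rfl⟩
      exact hbK x hxs
  have htot : ∑ l ∈ L, ∑ k ∈ K, joint k l ≤ 1 := by
    simp_rw [← hmargL]
    rw [sum_measureReal_preimage_singleton L fun l _ => ha (measurableSet_singleton l)]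
    exact measureReal_le_one
  rw [partitionEntropy_eq_sum hs haL, partitionEntropy_eq_sum hs hbK]
  simp_rw [hmargL, hmargK]
  exact sum_ent_sum_le_sum_ent_sum_add_logb (fun _ _ => measureReal_nonneg)
    (fun l _ => hsupp l) htot

end Partition

lemma Int.ncard_le_of_abs_sub_le {S : Set ℤ} {d : ℕ} (h : ∀ i ∈ S, ∀ j ∈ S, |i - j| ≤ d) :
    S.ncard ≤ 2 * d + 1 := by
  rcases S.eq_empty_or_nonempty with rfl | ⟨i₀, hi₀⟩
  · simp
  have hsub : S ⊆ ↑(Icc (i₀ - d) (i₀ + d)) := fun i hi => by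
    rw [coe_Icc, Set.mem_Icc, ← sub_le_iff_le_add', sub_le_comm, ← abs_sub_le_iff]
    exact h i₀ hi₀ i hi
  refine (Set.ncard_le_ncard hsub).trans_eq ?_
  rw [Set.ncard_coe_finset, Int.card_Icc]
  omega

lemma Int.abs_floor_sub_floor_le {u v C : ℝ} (h : |u - v| ≤ C) : |⌊u⌋ - ⌊v⌋| ≤ ⌈C⌉₊ := by
  have hlt : ((|⌊u⌋ - ⌊v⌋| : ℤ) : ℝ) < ⌈C⌉₊ + 1 := by
    rw [Int.cast_abs, Int.cast_sub, abs_sub_lt_iff]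
    have := abs_sub_le_iff.1 h
    constructor <;> linarith [Nat.le_ceil C, Int.floor_le u, Int.floor_le v,
      Int.lt_floor_add_one u, Int.lt_floor_add_one v]
  exact_mod_cast Int.lt_add_one_iff.1 (by exact_mod_cast hlt)

lemma Int.floor_mul_mem_Icc {x lo hi r : ℝ} (hr : 0 ≤ r) (hlo : lo ≤ x) (hhi : x ≤ hi) :
    ⌊x * r⌋ ∈ Icc ⌊lo * r⌋ ⌊hi * r⌋ :=
  mem_Icc.2 ⟨Int.floor_mono (by gcongr), Int.floor_mono (by gcongr)⟩

lemma ncard_image_floor_fiber_le {α : Type*} {s : Set α} {g h : α → ℝ} {C r : ℝ} (hC : 0 ≤ C)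
    (hr : 0 ≤ r) (hgh : ∀ x ∈ s, ∀ y ∈ s, |h x - h y| ≤ C * |g x - g y|) (l : ℤ) :
    ((fun x => ⌊h x * r⌋) '' (s ∩ (fun x => ⌊g x * r⌋) ⁻¹' {l})).ncard ≤ 2 * ⌈C⌉₊ + 1 := by
  refine Int.ncard_le_of_abs_sub_le ?_
  rintro _ ⟨x, ⟨hx, hxl⟩, rfl⟩ _ ⟨y, ⟨hy, hyl⟩, rfl⟩
  refine Int.abs_floor_sub_floor_le ?_
  have hg : |g x * r - g y * r| < 1 := Int.abs_sub_lt_one_of_floor_eq_floor (hxl.trans hyl.symm)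
  calc |h x * r - h y * r| = |h x - h y| * r := by rw [← sub_mul, abs_mul, abs_of_nonneg hr]
    _ ≤ C * |g x - g y| * r := by gcongr; exact hgh x hx y hy
    _ = C * |g x * r - g y * r| := by rw [← sub_mul, abs_mul, abs_of_nonneg hr, mul_assoc]
    _ ≤ C := mul_le_of_le_one_right hC hg.le

lemma HdyZ_eq_partitionEntropy (μ : Measure ℝ) (n : ℕ) :
    HdyZ μ n = partitionEntropy μ fun x => ⌊x * 2 ^ n⌋ := by
  have hcell (k : ℤ) : Set.Ico ((k : ℝ) / 2 ^ n) (((k : ℝ) + 1) / 2 ^ n) =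
      (fun x : ℝ => ⌊x * 2 ^ n⌋) ⁻¹' {k} := by
    ext x
    simp [Int.floor_eq_iff, div_le_iff₀, lt_div_iff₀]
  simp only [HdyZ, partitionEntropy, hcell, measureReal_def]

lemma HdyZ_map_eq_partitionEntropy {f : ℝ → ℝ} (hf : Measurable f) (μ : Measure ℝ) (n : ℕ) :
    HdyZ (μ.map f) n = partitionEntropy μ fun x => ⌊f x * 2 ^ n⌋ := by
  rw [HdyZ_eq_partitionEntropy, partitionEntropy, partitionEntropy]
  congr! 2 with k
  have hmeas : Measurable fun x : ℝ => ⌊x * 2 ^ n⌋ := by fun_prop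
  rw [map_measureReal_apply hf ((measurableSet_singleton k).preimage hmeas)]
  rfl

lemma logb_two_mul_ceil_add_one_le {C : ℝ} (hC : 1 ≤ C) :
    logb 2 (2 * ⌈C⌉₊ + 1 : ℕ) ≤ 3 + logb 2 C := by
  have hm : ((2 * ⌈C⌉₊ + 1 : ℕ) : ℝ) ≤ 2 ^ 3 * C := by
    push_cast
    linarith [Nat.ceil_lt_add_one (zero_le_one.trans hC)]
  calc logb 2 (2 * ⌈C⌉₊ + 1 : ℕ) ≤ logb 2 (2 ^ 3 * C) :=
        logb_le_logb_of_le one_lt_two (by positivity) hm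
    _ = 3 + logb 2 C := by
        rw [logb_mul (by norm_num) (by positivity), logb_pow, logb_self_eq_one one_lt_two]
        norm_num

theorem entropy_change_under_biLipschitz :
    ∃ A > (0 : ℝ), ∀ C ≥ (1 : ℝ), ∀ f : ℝ → ℝ, Measurable f →
      (∀ x ∈ Set.Ico (0 : ℝ) 1, ∀ y ∈ Set.Ico (0 : ℝ) 1,
        C⁻¹ * |x - y| ≤ |f x - f y| ∧ |f x - f y| ≤ C * |x - y|) →
      ∀ μ : Measure ℝ, IsProbabilityMeasure μ → μ (Set.Ico 0 1) = 1 →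
      ∀ n : ℕ, |HdyZ (Measure.map f μ) n - HdyZ μ n| ≤ A * (1 + Real.logb 2 C) := by
  refine ⟨3, by norm_num, fun C hC f hf hbil μ _ hμI n => ?_⟩
  have hs : μ (Set.Ico 0 1)ᶜ = 0 := (prob_compl_eq_zero_iff measurableSet_Ico).2 hμI
  have hC0 : 0 < C := zero_lt_one.trans_le hC
  have hr : (0 : ℝ) ≤ 2 ^ n := by positivity
  have hlip (x) (hx : x ∈ Set.Ico (0 : ℝ) 1) (y) (hy : y ∈ Set.Ico (0 : ℝ) 1) :
      |f x - f y| ≤ C * |x - y| := (hbil x hx y hy).2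
  have hlip_inv (x) (hx : x ∈ Set.Ico (0 : ℝ) 1) (y) (hy : y ∈ Set.Ico (0 : ℝ) 1) :
      |x - y| ≤ C * |f x - f y| := (inv_mul_le_iff₀ hC0).1 (hbil x hx y hy).1
  have hcell (x) (hx : x ∈ Set.Ico (0 : ℝ) 1) :
      ⌊x * 2 ^ n⌋ ∈ Icc ⌊(0 : ℝ) * 2 ^ n⌋ ⌊(1 : ℝ) * 2 ^ n⌋ :=
    Int.floor_mul_mem_Icc hr hx.1 hx.2.le
  have hfcell (x) (hx : x ∈ Set.Ico (0 : ℝ) 1) :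
      ⌊f x * 2 ^ n⌋ ∈ Icc ⌊(f 0 - C) * 2 ^ n⌋ ⌊(f 0 + C) * 2 ^ n⌋ := by
    have hfx := abs_sub_le_iff.1 ((hlip x hx 0 (by simp)).trans
      (mul_le_of_le_one_right hC0.le (by rw [sub_zero, abs_of_nonneg hx.1]; exact hx.2.le)))
    exact Int.floor_mul_mem_Icc hr (by linarith) (by linarith)
  have hmeas : Measurable fun x : ℝ => ⌊x * 2 ^ n⌋ := by fun_prop
  have hfmeas : Measurable fun x => ⌊f x * 2 ^ n⌋ := by fun_prop
  have hle := partitionEntropy_le_add_logb hs hmeas hfmeas hcell hfcell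
    (ncard_image_floor_fiber_le (g := fun x => x) hC0.le hr hlip)
  have hge := partitionEntropy_le_add_logb hs hfmeas hmeas hfcell hcell
    (ncard_image_floor_fiber_le (h := fun x => x) hC0.le hr hlip_inv)
  have hlog := logb_two_mul_ceil_add_one_le hC
  have hlogC := logb_nonneg one_lt_two hC
  rw [HdyZ_map_eq_partitionEntropy hf, HdyZ_eq_partitionEntropy, abs_sub_le_iff]
  constructor <;> linarith
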